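/- arXiv:2605.30520 — 3 statements merged into one kernel-verified Lean document; each statement's English description precedes it below -/
import Mathlib

section
/- Let n ≥ 1 and let l_0,...,l_{n-1} and m_0,...,m_{n-1} be real numbers in [0,1]. Then 1 - ∏_{i=0}^{n-1}(l_i + m_i - l_i·m_i) ≤ (1 - ∏_{i=0}^{n-1} l_i)·(1 - ∏_{i=0}^{n-1} m_i). -/
open Finset Set

/- With `x ∨ y := x + y - x * y = 1 - (1 - x) * (1 - y)`, the inequality is
`(∏ l) ∨ (∏ m) ≤ ∏ (lᵢ ∨ mᵢ)`: the operation `∨` is submultiplicative on `[0, 1]²`. By induction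
this reduces to two factors, where the defect `(a ∨ b) (c ∨ d) - (a c ∨ b d)` equals
`a d (1 - b) (1 - c) + b c (1 - a) (1 - d) ≥ 0`. -/

lemma mul_add_mul_sub_mul_mul_le {a b c d : ℝ} (ha : a ∈ Icc (0 : ℝ) 1) (hb : b ∈ Icc (0 : ℝ) 1)
    (hc : c ∈ Icc (0 : ℝ) 1) (hd : d ∈ Icc (0 : ℝ) 1) :
    a * c + b * d - a * c * (b * d) ≤ (a + b - a * b) * (c + d - c * d) := by
  obtain ⟨ha0, ha1⟩ := ha
  obtain ⟨hb0, hb1⟩ := hb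
  obtain ⟨hc0, hc1⟩ := hc
  obtain ⟨hd0, hd1⟩ := hd
  have hdefect : (a + b - a * b) * (c + d - c * d) - (a * c + b * d - a * c * (b * d)) =
      a * d * ((1 - b) * (1 - c)) + b * c * ((1 - a) * (1 - d)) := by ring
  have hdefect_nonneg : 0 ≤ a * d * ((1 - b) * (1 - c)) + b * c * ((1 - a) * (1 - d)) := by
    apply add_nonneg <;> apply mul_nonneg <;> apply mul_nonneg <;> linarith
  linarith

lemma add_sub_mul_nonneg {a b : ℝ} (ha : a ∈ Icc (0 : ℝ) 1) (hb : 0 ≤ b) : 0 ≤ a + b - a * b := by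
  nlinarith [ha.1, ha.2]

lemma prod_mem_Icc_zero_one {ι : Type*} {s : Finset ι} {x : ι → ℝ}
    (hx : ∀ i ∈ s, x i ∈ Icc (0 : ℝ) 1) : ∏ i ∈ s, x i ∈ Icc (0 : ℝ) 1 :=
  ⟨prod_nonneg fun i hi => (hx i hi).1, prod_le_one (fun i hi => (hx i hi).1) fun i hi => (hx i hi).2⟩

theorem prod_add_prod_sub_prod_mul_prod_le {ι : Type*} [DecidableEq ι] (s : Finset ι) {x y : ι → ℝ}
    (hx : ∀ i ∈ s, x i ∈ Icc (0 : ℝ) 1) (hy : ∀ i ∈ s, y i ∈ Icc (0 : ℝ) 1) :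
    (∏ i ∈ s, x i) + (∏ i ∈ s, y i) - (∏ i ∈ s, x i) * (∏ i ∈ s, y i) ≤
      ∏ i ∈ s, (x i + y i - x i * y i) := by
  induction s using Finset.induction_on with
  | empty => simp
  | insert j s hj ih =>
    rw [Finset.forall_mem_insert] at hx hy
    rw [prod_insert hj, prod_insert hj, prod_insert hj]
    calc x j * (∏ i ∈ s, x i) + y j * (∏ i ∈ s, y i) - x j * (∏ i ∈ s, x i) * (y j * ∏ i ∈ s, y i)
        ≤ (x j + y j - x j * y j) *
            ((∏ i ∈ s, x i) + (∏ i ∈ s, y i) - (∏ i ∈ s, x i) * (∏ i ∈ s, y i)) :=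
          mul_add_mul_sub_mul_mul_le hx.1 hy.1 (prod_mem_Icc_zero_one hx.2)
            (prod_mem_Icc_zero_one hy.2)
      _ ≤ (x j + y j - x j * y j) * ∏ i ∈ s, (x i + y i - x i * y i) :=
          mul_le_mul_of_nonneg_left (ih hx.2 hy.2) (add_sub_mul_nonneg hx.1 hy.1.1)

theorem stmt_0_general (n : ℕ) (l m : ℕ → ℝ)
    (hl : ∀ i < n, l i ∈ Set.Icc (0:ℝ) 1) (hm : ∀ i < n, m i ∈ Set.Icc (0:ℝ) 1) :
    1 - ∏ i ∈ Finset.range n, (l i + m i - l i * m i) ≤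
      (1 - ∏ i ∈ Finset.range n, l i) * (1 - ∏ i ∈ Finset.range n, m i) := by
  have key := prod_add_prod_sub_prod_mul_prod_le (range n)
    (fun i hi => hl i (mem_range.mp hi)) (fun i hi => hm i (mem_range.mp hi))
  linarith

theorem stmt_0 (n : ℕ) (hn : 1 ≤ n) (l m : ℕ → ℝ)
    (hl : ∀ i < n, l i ∈ Set.Icc (0:ℝ) 1) (hm : ∀ i < n, m i ∈ Set.Icc (0:ℝ) 1) :
    1 - ∏ i ∈ Finset.range n, (l i + m i - l i * m i) ≤
      (1 - ∏ i ∈ Finset.range n, l i) * (1 - ∏ i ∈ Finset.range n, m i) :=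
  stmt_0_general n l m hl hm
end

section
/- For all real r in [0,1] and all natural numbers n ≥ 1, [1 - (1-r)^n]^2 ≥ 1 - (1 - r^2)^n. -/
/-! Put `a = (1 - r) ^ n` and `b = (1 + r) ^ n`, so that `a * b = (1 - r ^ 2) ^ n`. The inequality
`(1 - a) ^ 2 ≥ 1 - a * b` is equivalent to `a * (a + b - 2) ≥ 0`, which holds because `a ≥ 0` and,
by Bernoulli's inequality applied to `r` and `-r`, `a + b ≥ 2`. -/

theorem two_le_one_add_pow_add_one_sub_pow {r : ℝ} (hr : |r| ≤ 2) (n : ℕ) :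
    2 ≤ (1 + r) ^ n + (1 - r) ^ n := by
  obtain ⟨hr₁, hr₂⟩ := abs_le.1 hr
  have hplus := one_add_mul_le_pow hr₁ n
  have hminus := one_add_mul_le_pow (neg_le_neg hr₂) n
  rw [← sub_eq_add_neg] at hminus
  linarith

theorem one_sub_mul_le_one_sub_sq {a b : ℝ} (ha : 0 ≤ a) (hab : 2 ≤ a + b) :
    1 - a * b ≤ (1 - a) ^ 2 := by
  nlinarith [mul_nonneg ha (sub_nonneg.2 hab)]

theorem stmt_2_general (r : ℝ) (hr : r ∈ Set.Icc (0:ℝ) 1) (n : ℕ) :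
    (1 - (1 - r) ^ n) ^ 2 ≥ 1 - (1 - r ^ 2) ^ n := by
  obtain ⟨hr₀, hr₁⟩ := hr
  have hsum : 2 ≤ (1 - r) ^ n + (1 + r) ^ n := by
    rw [add_comm]
    exact two_le_one_add_pow_add_one_sub_pow (by rw [abs_of_nonneg hr₀]; linarith) n
  have hprod : (1 - r) ^ n * (1 + r) ^ n = (1 - r ^ 2) ^ n := by
    rw [← mul_pow]; ring
  rw [← hprod]
  exact one_sub_mul_le_one_sub_sq (pow_nonneg (by linarith) n) hsum

theorem stmt_2 (r : ℝ) (hr : r ∈ Set.Icc (0:ℝ) 1) (n : ℕ) (hn : 1 ≤ n) :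
    (1 - (1 - r) ^ n) ^ 2 ≥ 1 - (1 - r ^ 2) ^ n :=
  stmt_2_general r hr n
end

section
/- Let q_1, q_2 ∈ [0,1] be the success probabilities of two independent phases, and suppose a transmission over a single path succeeds iff both phases succeed. For n independent identical paths, the probability that at least one path succeeds is 1 - (1 - q_1 q_2)^n, which is at most (1 - (1-q_1)^n)(1 - (1-q_2)^n). -/
/-!
With `a = 1 - q₁` and `b = 1 - q₂` the failure probabilities of the two phases, both sides are
complements of values of the "probabilistic or" `a + b - a * b = 1 - (1 - a) * (1 - b)`:
the left side is `1 - probOr a b ^ n` and the right side is `1 - probOr (a ^ n) (b ^ n)`.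
So the theorem says that `probOr` is submultiplicative along powers, which follows by induction
from `probOr (a * a') (b * b') ≤ probOr a b * probOr a' b'`.
-/

open Set

def probOr (a b : ℝ) : ℝ := a + b - a * b

lemma probOr_nonneg {a b : ℝ} (ha : a ∈ Icc (0 : ℝ) 1) (hb : b ∈ Icc (0 : ℝ) 1) :
    0 ≤ probOr a b := by
  unfold probOr
  nlinarith [ha.1, ha.2, hb.1, hb.2]

/- For independent events with `P A = a`, `P B = b`, `P A' = a'`, `P B' = b'` this is
`(A ∩ A') ∪ (B ∩ B') ⊆ (A ∪ B) ∩ (A' ∪ B')`; the difference of the two sets is the disjoint union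
of `A ∩ A'ᶜ ∩ B' ∩ Bᶜ` and `B ∩ B'ᶜ ∩ A' ∩ Aᶜ`, whose probabilities make up the identity below. -/
lemma probOr_mul_le_mul {a a' b b' : ℝ} (ha : a ∈ Icc (0 : ℝ) 1) (ha' : a' ∈ Icc (0 : ℝ) 1)
    (hb : b ∈ Icc (0 : ℝ) 1) (hb' : b' ∈ Icc (0 : ℝ) 1) :
    probOr (a * a') (b * b') ≤ probOr a b * probOr a' b' := by
  have gap : probOr a b * probOr a' b' - probOr (a * a') (b * b') =
      a * (1 - a') * b' * (1 - b) + b * (1 - b') * a' * (1 - a) := by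
    unfold probOr; ring
  have h₁ : 0 ≤ a * (1 - a') * b' * (1 - b) :=
    mul_nonneg (mul_nonneg (mul_nonneg ha.1 (sub_nonneg.2 ha'.2)) hb'.1) (sub_nonneg.2 hb.2)
  have h₂ : 0 ≤ b * (1 - b') * a' * (1 - a) :=
    mul_nonneg (mul_nonneg (mul_nonneg hb.1 (sub_nonneg.2 hb'.2)) ha'.1) (sub_nonneg.2 ha.2)
  linarith

lemma pow_mem_Icc_zero_one {a : ℝ} (ha : a ∈ Icc (0 : ℝ) 1) (n : ℕ) : a ^ n ∈ Icc (0 : ℝ) 1 :=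
  ⟨pow_nonneg ha.1 n, pow_le_one₀ ha.1 ha.2⟩

lemma probOr_pow_le_pow {a b : ℝ} (ha : a ∈ Icc (0 : ℝ) 1) (hb : b ∈ Icc (0 : ℝ) 1) (n : ℕ) :
    probOr (a ^ n) (b ^ n) ≤ probOr a b ^ n := by
  induction n with
  | zero => simp [probOr]
  | succ n ih =>
    calc probOr (a ^ (n + 1)) (b ^ (n + 1)) = probOr (a * a ^ n) (b * b ^ n) := by
          rw [pow_succ', pow_succ']
      _ ≤ probOr a b * probOr (a ^ n) (b ^ n) :=
          probOr_mul_le_mul ha (pow_mem_Icc_zero_one ha n) hb (pow_mem_Icc_zero_one hb n)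
      _ ≤ probOr a b * probOr a b ^ n := mul_le_mul_of_nonneg_left ih (probOr_nonneg ha hb)
      _ = probOr a b ^ (n + 1) := (pow_succ' _ _).symm

lemma one_sub_mem_Icc_zero_one {q : ℝ} (hq : q ∈ Icc (0 : ℝ) 1) : 1 - q ∈ Icc (0 : ℝ) 1 :=
  ⟨by linarith [hq.2], by linarith [hq.1]⟩

theorem stmt_18 (q1 q2 : ℝ) (hq1 : q1 ∈ Set.Icc (0:ℝ) 1) (hq2 : q2 ∈ Set.Icc (0:ℝ) 1)
    (n : ℕ) :
    1 - (1 - q1 * q2) ^ n ≤ (1 - (1 - q1) ^ n) * (1 - (1 - q2) ^ n) := by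
  have key := probOr_pow_le_pow (one_sub_mem_Icc_zero_one hq1) (one_sub_mem_Icc_zero_one hq2) n
  have hbase : probOr (1 - q1) (1 - q2) = 1 - q1 * q2 := by unfold probOr; ring
  have hpow : probOr ((1 - q1) ^ n) ((1 - q2) ^ n) = 1 - (1 - (1 - q1) ^ n) * (1 - (1 - q2) ^ n) := by
    unfold probOr; ring
  rw [hbase, hpow] at key
  linarith
end
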